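/- arXiv:2603.08239 — 2 statements merged into one kernel-verified Lean document; each statement's English description precedes it below -/
import Mathlib

section
/- Assume r ∈ (0,∞)^T is a generic point in the sense that for every token i: log r_i ≠ 0, |u_i| ≠ ε, |v_i| ≠ ε, and log s⁺ ∉ {C⁺, (1+1/T)·C⁺} and log s⁻ ∉ {C⁻, (1+1/T)·C⁻}. Define γ^{(l)} := 1 if log s^{(l)} < C^{(l)}; γ^{(l)} := −T if C^{(l)} < log s^{(l)} < (1+1/T)·C^{(l)}; and γ^{(l)} := 0 if log s^{(l)} > (1+1/T)·C^{(l)}. Then all partial derivatives of 𝒢 exist at r, and for all tokens i, j: ∂𝒢(r)_i/∂r_j = (𝒢(r)_i / r_j) · [ 1{|u_i| < ε}·1{i = j} + (1/T)·( γ^{(l_j)} − 1{|u_i| < ε}·1{l_i = l_j} − 1{|v_i| < ε}·1{l_i ≠ l_j} ) ], where 1{·} denotes the indicator. -/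
/-!
Along the `j`-th coordinate line `t ↦ update r j t`, every ingredient of `𝒢(r)_i` is, near a
generic point, an affine function of `log t`: the signed aggregate `l · log s^{(l)}` picks up
the `j`-th summand only when `l = l_j` (slope `1 / T` in `log t`), the labels `l_i` are locally
constant, and both gates are locally affine with slopes `γ^{(l)}` resp. `1{|·| < ε}`. The chain
rule then gives the exponent's derivative as `1 / r_j` times the bracket, and `exp` contributes
the factor `𝒢(r)_i`.
-/

open Filter Topology Function

theorem Real.eventually_sign_eq {y : ℝ} (hy : y ≠ 0) :
    ∀ᶠ t in 𝓝 y, Real.sign t = Real.sign y := by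
  rcases hy.lt_or_gt with hneg | hpos
  · filter_upwards [eventually_lt_nhds hneg] with t ht
    rw [Real.sign_of_neg ht, Real.sign_of_neg hneg]
  · filter_upwards [eventually_gt_nhds hpos] with t ht
    rw [Real.sign_of_pos ht, Real.sign_of_pos hpos]

theorem HasDerivAt.max_zero {f : ℝ → ℝ} {f' x : ℝ} (hf : HasDerivAt f f' x) (hx : f x ≠ 0) :
    HasDerivAt (fun t => max (f t) 0) (if 0 < f x then f' else 0) x := by
  rcases hx.lt_or_gt with hneg | hpos
  · rw [if_neg (not_lt.mpr hneg.le)]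
    refine (hasDerivAt_const x 0).congr_of_eventuallyEq ?_
    filter_upwards [hf.continuousAt.eventually_lt continuousAt_const hneg] with t ht
    exact max_eq_right ht.le
  · rw [if_pos hpos]
    refine hf.congr_of_eventuallyEq ?_
    filter_upwards [continuousAt_const.eventually_lt hf.continuousAt hpos] with t ht
    exact max_eq_left ht.le

section Update

variable {ι : Type*} [DecidableEq ι] {g : ℝ → ℝ} {g' : ℝ} {r : ι → ℝ} {j : ι}

theorem HasDerivAt.comp_update_apply (hg : HasDerivAt g g' (r j)) (i : ι) :
    HasDerivAt (fun t => g (update r j t i)) (if i = j then g' else 0) (r j) := by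
  rcases eq_or_ne i j with rfl | hij
  · simpa using hg
  · simpa [update_of_ne hij, hij] using hasDerivAt_const (r j) (g (r i))

theorem HasDerivAt.sum_comp_update [Fintype ι] (hg : HasDerivAt g g' (r j)) :
    HasDerivAt (fun t => ∑ k, g (update r j t k)) g' (r j) := by
  simpa using HasDerivAt.fun_sum (u := Finset.univ) fun k _ => hg.comp_update_apply k

end Update

noncomputable section

namespace FiberPO

def clip (ε x : ℝ) : ℝ := max (-ε) (min x ε)

def aggGate (y C κ : ℝ) : ℝ :=
  if |y| ≤ C then y
  else if |y| < (1 + 1 / κ) * C then Real.sign y * (κ + 1) * C - κ * y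
  else 0

/-- `gateSlope (log s^{(l)}) C^{(l)} T` is the paper's `γ^{(l)}`. -/
def gateSlope (y C κ : ℝ) : ℝ :=
  if y < C then 1 else if y < (1 + 1 / κ) * C then -κ else 0

theorem hasDerivAt_clip {ε y : ℝ} (h : |y| ≠ ε) :
    HasDerivAt (clip ε) (if |y| < ε then 1 else 0) y := by
  rcases h.lt_or_gt with hlt | hgt
  · rw [if_pos hlt]
    refine (hasDerivAt_id y).congr_of_eventuallyEq ?_
    filter_upwards [continuous_abs.continuousAt.eventually_lt continuousAt_const hlt] with t ht
    obtain ⟨h₁, h₂⟩ := abs_lt.mp ht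
    simp only [clip, id, min_eq_left h₂.le, max_eq_right h₁.le]
  · rw [if_neg (not_lt.mpr hgt.le)]
    rcases lt_abs.mp hgt with hy | hy
    · refine (hasDerivAt_const y (max (-ε) ε)).congr_of_eventuallyEq ?_
      filter_upwards [eventually_gt_nhds hy] with t ht
      rw [clip, min_eq_right ht.le]
    · refine (hasDerivAt_const y (-ε)).congr_of_eventuallyEq ?_
      filter_upwards [eventually_lt_nhds (lt_neg_of_lt_neg hy)] with t ht
      exact max_eq_left ((min_le_left t ε).trans ht.le)

theorem hasDerivAt_aggGate {y C κ : ℝ} (hκ : 0 < κ) (hC : |y| ≠ C)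
    (hD : |y| ≠ (1 + 1 / κ) * C) :
    HasDerivAt (fun z => aggGate z C κ) (gateSlope |y| C κ) y := by
  have habs := continuous_abs.continuousAt (x := y)
  rcases hC.lt_or_gt with hlt | hgt
  · rw [gateSlope, if_pos hlt]
    refine (hasDerivAt_id y).congr_of_eventuallyEq ?_
    filter_upwards [habs.eventually_lt continuousAt_const hlt] with t ht
    rw [aggGate, if_pos ht.le, id]
  rcases hD.lt_or_gt with hlt' | hgt'
  · rw [gateSlope, if_neg (not_lt.mpr hgt.le), if_pos hlt']
    -- the band `C < |y| < (1 + 1/κ) C` is empty unless `C > 0`, so `sign` is constant near `y`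
    have hC0 : 0 < C := by
      by_contra! h
      have : 0 ≤ 1 / κ * -C := mul_nonneg (one_div_pos.mpr hκ).le (neg_nonneg.mpr h)
      linarith
    have hy : y ≠ 0 := abs_pos.mp (hC0.trans hgt)
    refine ((hasDerivAt_id y).const_mul κ |>.const_sub (Real.sign y * (κ + 1) * C)).congr_deriv
      (by simp) |>.congr_of_eventuallyEq ?_
    filter_upwards [habs.eventually_lt continuousAt_const hlt',
      continuousAt_const.eventually_lt habs hgt,
      Real.eventually_sign_eq hy] with t ht₁ ht₂ ht₃
    rw [aggGate, if_neg (not_le.mpr ht₂), if_pos ht₁, ht₃]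
    rfl
  · rw [gateSlope, if_neg (not_lt.mpr hgt.le), if_neg (not_lt.mpr hgt'.le)]
    refine (hasDerivAt_const y 0).congr_of_eventuallyEq ?_
    filter_upwards [continuousAt_const.eventually_lt habs hgt,
      continuousAt_const.eventually_lt habs hgt'] with t ht₁ ht₂
    rw [aggGate, if_neg (not_le.mpr ht₁), if_neg (not_lt.mpr ht₂.le)]

theorem hasDerivAt_aggGate_of_nonneg {y C κ : ℝ} (hκ : 0 < κ) (hy : 0 ≤ y) (hC : y ≠ C)
    (hD : y ≠ (1 + 1 / κ) * C) :
    HasDerivAt (fun z => aggGate z C κ) (gateSlope y C κ) y := by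
  simpa only [abs_of_nonneg hy] using
    hasDerivAt_aggGate hκ ((abs_of_nonneg hy).trans_ne hC) ((abs_of_nonneg hy).trans_ne hD)

variable {T : ℕ}

def logSPos (ρ : Fin T → ℝ) : ℝ := (1 / (T : ℝ)) * ∑ t, max (Real.log (ρ t)) 0

def logSNeg (ρ : Fin T → ℝ) : ℝ := (1 / (T : ℝ)) * ∑ t, max (-Real.log (ρ t)) 0

/-- The labels `±1` are encoded as reals, and `logS ρ σ` is `log s^{(σ)}`. -/
def label (ρ : Fin T → ℝ) (i : Fin T) : ℝ := if 0 ≤ Real.log (ρ i) then 1 else -1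

def logS (ρ : Fin T → ℝ) (σ : ℝ) : ℝ := if σ = 1 then logSPos ρ else logSNeg ρ

theorem logSPos_nonneg (ρ : Fin T → ℝ) : 0 ≤ logSPos ρ :=
  mul_nonneg (by positivity) (Finset.sum_nonneg fun _ _ => le_max_right _ _)

theorem logSNeg_nonneg (ρ : Fin T → ℝ) : 0 ≤ logSNeg ρ :=
  mul_nonneg (by positivity) (Finset.sum_nonneg fun _ _ => le_max_right _ _)

theorem label_eq_one_or (ρ : Fin T → ℝ) (i : Fin T) : label ρ i = 1 ∨ label ρ i = -1 := by
  unfold label; split_ifs <;> simp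

theorem label_mul_self (ρ : Fin T → ℝ) (i : Fin T) : label ρ i * label ρ i = 1 := by
  rcases label_eq_one_or ρ i with h | h <;> rw [h] <;> norm_num

theorem abs_label_mul (ρ : Fin T → ℝ) (i : Fin T) (a : ℝ) : |label ρ i * a| = |a| := by
  rcases label_eq_one_or ρ i with h | h <;> simp [h]

theorem label_eq_one_iff {ρ : Fin T → ℝ} {i : Fin T} (h : Real.log (ρ i) ≠ 0) :
    label ρ i = 1 ↔ 0 < Real.log (ρ i) := by
  rw [label, ← h.symm.le_iff_lt]
  split_ifs with h' <;> norm_num [h']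

theorem label_eq_neg_one_iff {ρ : Fin T → ℝ} {i : Fin T} :
    label ρ i = -1 ↔ Real.log (ρ i) < 0 := by
  rw [label, ← not_le]; split_ifs <;> norm_num [*]

variable {r : Fin T → ℝ} {i j : Fin T}

theorem label_update_eventually (hi : Real.log (r i) ≠ 0) :
    ∀ᶠ t in 𝓝 (r j), label (update r j t) i = label r i := by
  rcases eq_or_ne i j with rfl | hij
  · have hlog := Real.continuousAt_log (Real.log_ne_zero.mp hi).1
    rcases hi.lt_or_gt with hneg | hpos
    · filter_upwards [hlog.eventually_lt continuousAt_const hneg] with t ht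
      simp [label, ht.not_ge, hneg.not_ge]
    · filter_upwards [continuousAt_const.eventually_lt hlog hpos] with t ht
      simp [label, ht.le, hpos.le]
  · exact Eventually.of_forall fun t => by simp [label, update_of_ne hij]

theorem hasDerivAt_logSPos_update (hj : Real.log (r j) ≠ 0) :
    HasDerivAt (fun t => logSPos (update r j t))
      (1 / (T : ℝ) * if 0 < Real.log (r j) then (r j)⁻¹ else 0) (r j) :=
  ((Real.hasDerivAt_log (Real.log_ne_zero.mp hj).1).max_zero hj).sum_comp_update.const_mul _

theorem hasDerivAt_logSNeg_update (hj : Real.log (r j) ≠ 0) :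
    HasDerivAt (fun t => logSNeg (update r j t))
      (1 / (T : ℝ) * if 0 < -Real.log (r j) then -(r j)⁻¹ else 0) (r j) :=
  ((Real.hasDerivAt_log (Real.log_ne_zero.mp hj).1).neg.max_zero
    (neg_ne_zero.mpr hj)).sum_comp_update.const_mul _

theorem hasDerivAt_signedLogS_update {σ : ℝ} (hσ : σ = 1 ∨ σ = -1) (hj : Real.log (r j) ≠ 0) :
    HasDerivAt (fun t => σ * logS (update r j t) σ)
      (if σ = label r j then 1 / (T : ℝ) * (r j)⁻¹ else 0) (r j) := by
  rcases hσ with rfl | rfl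
  · simpa [logS, eq_comm, label_eq_one_iff hj] using hasDerivAt_logSPos_update hj
  · have hne : (-1 : ℝ) ≠ 1 := by norm_num
    simp only [logS, if_neg hne, neg_one_mul, @eq_comm _ (-1) (label r j), label_eq_neg_one_iff]
    refine (hasDerivAt_logSNeg_update hj).fun_neg.congr_deriv ?_
    simp only [neg_pos]
    split_ifs <;> ring

theorem hasDerivAt_aggGate_sub_update {Cp Cm κ : ℝ} (hκ : 0 < κ) (hj : Real.log (r j) ≠ 0)
    (hp₁ : logSPos r ≠ Cp) (hp₂ : logSPos r ≠ (1 + 1 / κ) * Cp)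
    (hm₁ : logSNeg r ≠ Cm) (hm₂ : logSNeg r ≠ (1 + 1 / κ) * Cm) :
    HasDerivAt
      (fun t => aggGate (logSPos (update r j t)) Cp κ - aggGate (logSNeg (update r j t)) Cm κ)
      (gateSlope (logS r (label r j)) (if label r j = 1 then Cp else Cm) κ *
        (1 / (T : ℝ) * (r j)⁻¹)) (r j) := by
  have hP := (hasDerivAt_aggGate_of_nonneg hκ (logSPos_nonneg r) hp₁ hp₂).comp_of_eq (r j)
    (hasDerivAt_logSPos_update hj) (by rw [update_eq_self])
  have hM := (hasDerivAt_aggGate_of_nonneg hκ (logSNeg_nonneg r) hm₁ hm₂).comp_of_eq (r j)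
    (hasDerivAt_logSNeg_update hj) (by rw [update_eq_self])
  refine (hP.fun_sub hM).congr_deriv ?_
  have hne : (-1 : ℝ) ≠ 1 := by norm_num
  rcases hj.lt_or_gt with hneg | hpos
  · simp [logS, label, hneg, hneg.not_ge, hneg.le.not_gt, hne]
  · simp [logS, label, hpos, hpos.le]

def fiberResidual (ρ : Fin T → ℝ) (i : Fin T) : ℝ :=
  label ρ i * Real.log (ρ i) - logS ρ (label ρ i)

def oppAggregate (ρ : Fin T → ℝ) (i : Fin T) : ℝ := -logS ρ (-label ρ i)

def gatedRatio (ε Cp Cm : ℝ) (ρ : Fin T → ℝ) (i : Fin T) : ℝ :=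
  Real.exp (aggGate (logSPos ρ) Cp T - aggGate (logSNeg ρ) Cm T +
    clip ε (label ρ i * fiberResidual ρ i) - clip ε (label ρ i * oppAggregate ρ i))

theorem hasDerivAt_label_mul_fiberResidual_update (hi : Real.log (r i) ≠ 0)
    (hj : Real.log (r j) ≠ 0) :
    HasDerivAt (fun t => label (update r j t) i * fiberResidual (update r j t) i)
      ((if i = j then (r j)⁻¹ else 0) -
        if label r i = label r j then 1 / (T : ℝ) * (r j)⁻¹ else 0) (r j) := by
  refine (((Real.hasDerivAt_log (Real.log_ne_zero.mp hj).1).comp_update_apply i).fun_sub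
    (hasDerivAt_signedLogS_update (label_eq_one_or r i) hj)).congr_of_eventuallyEq ?_
  filter_upwards [label_update_eventually hi] with t ht
  rw [fiberResidual, ht]
  linear_combination Real.log (update r j t i) * label_mul_self r i

theorem hasDerivAt_label_mul_oppAggregate_update (hi : Real.log (r i) ≠ 0)
    (hj : Real.log (r j) ≠ 0) :
    HasDerivAt (fun t => label (update r j t) i * oppAggregate (update r j t) i)
      (if label r i = label r j then 0 else 1 / (T : ℝ) * (r j)⁻¹) (r j) := by
  have hσ : -label r i = 1 ∨ -label r i = -1 := by
    rcases label_eq_one_or r i with h | h <;> simp [h]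
  have hopp : -label r i = label r j ↔ ¬label r i = label r j := by
    rcases label_eq_one_or r i with h | h <;> rcases label_eq_one_or r j with h' | h' <;>
      norm_num [h, h']
  refine ((hasDerivAt_signedLogS_update hσ hj).congr_deriv
    (by simp only [hopp, ite_not])).congr_of_eventuallyEq ?_
  filter_upwards [label_update_eventually hi] with t ht
  rw [oppAggregate, ht]
  ring

theorem hasDerivAt_gatedRatio_update {ε Cp Cm : ℝ} (hi : Real.log (r i) ≠ 0)
    (hj : Real.log (r j) ≠ 0) (hu : |fiberResidual r i| ≠ ε) (hv : |oppAggregate r i| ≠ ε)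
    (hp₁ : logSPos r ≠ Cp) (hp₂ : logSPos r ≠ (1 + 1 / (T : ℝ)) * Cp)
    (hm₁ : logSNeg r ≠ Cm) (hm₂ : logSNeg r ≠ (1 + 1 / (T : ℝ)) * Cm) :
    HasDerivAt (fun t => gatedRatio ε Cp Cm (update r j t) i)
      (gatedRatio ε Cp Cm r i / r j *
        ((if |fiberResidual r i| < ε then (if i = j then (1 : ℝ) else 0) else 0) +
          1 / (T : ℝ) * (gateSlope (logS r (label r j)) (if label r j = 1 then Cp else Cm) T
            - (if |fiberResidual r i| < ε then (if label r i = label r j then 1 else 0) else 0)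
            - (if |oppAggregate r i| < ε then (if label r i = label r j then 0 else 1) else 0))))
      (r j) := by
  have hT : (0 : ℝ) < T := by exact_mod_cast i.pos
  have hU := (hasDerivAt_clip ((abs_label_mul r i _).trans_ne hu)).comp_of_eq (r j)
    (hasDerivAt_label_mul_fiberResidual_update hi hj) (by rw [update_eq_self])
  have hV := (hasDerivAt_clip ((abs_label_mul r i _).trans_ne hv)).comp_of_eq (r j)
    (hasDerivAt_label_mul_oppAggregate_update hi hj) (by rw [update_eq_self])
  refine (((hasDerivAt_aggGate_sub_update hT hj hp₁ hp₂ hm₁ hm₂).fun_add hU).fun_sub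
    hV).exp.congr_deriv ?_
  simp only [comp_apply, update_eq_self, abs_label_mul]
  rw [gatedRatio]
  split_ifs <;> ring

end FiberPO

end

open FiberPO

theorem stmt_16_general (T : ℕ) (ε Cp Cm : ℝ) (r : Fin T → ℝ) :
    let clip : ℝ → ℝ := fun x => max (-ε) (min x ε)
    let gagg : ℝ → ℝ → ℝ → ℝ := fun y C κ =>
      if |y| ≤ C then y
      else if |y| < (1 + 1 / κ) * C then Real.sign y * (κ + 1) * C - κ * y
      else 0
    let logsp : (Fin T → ℝ) → ℝ := fun ρ => (1 / (T : ℝ)) * ∑ t, max (Real.log (ρ t)) 0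
    let logsm : (Fin T → ℝ) → ℝ := fun ρ => (1 / (T : ℝ)) * ∑ t, max (-Real.log (ρ t)) 0
    let l : (Fin T → ℝ) → Fin T → ℝ := fun ρ i => if 0 ≤ Real.log (ρ i) then 1 else -1
    let slog : (Fin T → ℝ) → ℝ → ℝ := fun ρ x => if x = 1 then logsp ρ else logsm ρ
    let u : (Fin T → ℝ) → Fin T → ℝ := fun ρ i => l ρ i * Real.log (ρ i) - slog ρ (l ρ i)
    let v : (Fin T → ℝ) → Fin T → ℝ := fun ρ i => -slog ρ (-(l ρ i))
    let G : (Fin T → ℝ) → Fin T → ℝ := fun ρ i =>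
      Real.exp (gagg (logsp ρ) Cp (T : ℝ) - gagg (logsm ρ) Cm (T : ℝ)
        + clip (l ρ i * u ρ i) - clip (l ρ i * v ρ i))
    let Cl : ℝ → ℝ := fun x => if x = 1 then Cp else Cm
    let γl : ℝ → ℝ := fun x =>
      if slog r x < Cl x then 1
      else if slog r x < (1 + 1 / (T : ℝ)) * Cl x then -(T : ℝ)
      else 0
    (∀ i, Real.log (r i) ≠ 0) →
    (∀ i, |u r i| ≠ ε) →
    (∀ i, |v r i| ≠ ε) →
    logsp r ≠ Cp → logsp r ≠ (1 + 1 / (T : ℝ)) * Cp →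
    logsm r ≠ Cm → logsm r ≠ (1 + 1 / (T : ℝ)) * Cm →
    ∀ i j : Fin T,
      HasDerivAt (fun t => G (Function.update r j t) i)
        ((G r i / r j) *
          ((if |u r i| < ε then (if i = j then (1 : ℝ) else 0) else 0) +
            (1 / (T : ℝ)) * (γl (l r j)
              - (if |u r i| < ε then (if l r i = l r j then (1 : ℝ) else 0) else 0)
              - (if |v r i| < ε then (if l r i = l r j then (0 : ℝ) else 1) else 0))))
        (r j) := by
  intro clip gagg logsp logsm l slog u v G Cl γl hlog hu hv hp₁ hp₂ hm₁ hm₂ i j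
  exact hasDerivAt_gatedRatio_update (hlog i) (hlog j) (hu i) (hv i) hp₁ hp₂ hm₁ hm₂

/-- at a generic point r, all partial derivatives of the
FiberPO ratio gating map 𝒢 exist and satisfy the closed-form Jacobian
formula
∂𝒢(r)_i/∂r_j = (𝒢(r)_i/r_j)·[1{|u_i|<ε}1{i=j}
  + (1/T)(γ^{(l_j)} − 1{|u_i|<ε}1{l_i=l_j} − 1{|v_i|<ε}1{l_i≠l_j})]. -/
theorem stmt_16 (T : ℕ) (hT : 1 ≤ T) (ε Cp Cm : ℝ)
    (hε : 0 < ε) (hCp : 0 < Cp) (hCm : 0 < Cm)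
    (r : Fin T → ℝ) (hr : ∀ t, 0 < r t) :
    let clip : ℝ → ℝ := fun x => max (-ε) (min x ε)
    let gagg : ℝ → ℝ → ℝ → ℝ := fun y C κ =>
      if |y| ≤ C then y
      else if |y| < (1 + 1 / κ) * C then Real.sign y * (κ + 1) * C - κ * y
      else 0
    let logsp : (Fin T → ℝ) → ℝ := fun ρ => (1 / (T : ℝ)) * ∑ t, max (Real.log (ρ t)) 0
    let logsm : (Fin T → ℝ) → ℝ := fun ρ => (1 / (T : ℝ)) * ∑ t, max (-Real.log (ρ t)) 0
    let l : (Fin T → ℝ) → Fin T → ℝ := fun ρ i => if 0 ≤ Real.log (ρ i) then 1 else -1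
    let slog : (Fin T → ℝ) → ℝ → ℝ := fun ρ x => if x = 1 then logsp ρ else logsm ρ
    let u : (Fin T → ℝ) → Fin T → ℝ := fun ρ i => l ρ i * Real.log (ρ i) - slog ρ (l ρ i)
    let v : (Fin T → ℝ) → Fin T → ℝ := fun ρ i => -slog ρ (-(l ρ i))
    let G : (Fin T → ℝ) → Fin T → ℝ := fun ρ i =>
      Real.exp (gagg (logsp ρ) Cp (T : ℝ) - gagg (logsm ρ) Cm (T : ℝ)
        + clip (l ρ i * u ρ i) - clip (l ρ i * v ρ i))
    let Cl : ℝ → ℝ := fun x => if x = 1 then Cp else Cm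
    let γl : ℝ → ℝ := fun x =>
      if slog r x < Cl x then 1
      else if slog r x < (1 + 1 / (T : ℝ)) * Cl x then -(T : ℝ)
      else 0
    (∀ i, Real.log (r i) ≠ 0) →
    (∀ i, |u r i| ≠ ε) →
    (∀ i, |v r i| ≠ ε) →
    logsp r ≠ Cp → logsp r ≠ (1 + 1 / (T : ℝ)) * Cp →
    logsm r ≠ Cm → logsm r ≠ (1 + 1 / (T : ℝ)) * Cm →
    ∀ i j : Fin T,
      HasDerivAt (fun t => G (Function.update r j t) i)
        ((G r i / r j) *
          ((if |u r i| < ε then (if i = j then (1 : ℝ) else 0) else 0) +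
            (1 / (T : ℝ)) * (γl (l r j)
              - (if |u r i| < ε then (if l r i = l r j then (1 : ℝ) else 0) else 0)
              - (if |v r i| < ε then (if l r i = l r j then (0 : ℝ) else 1) else 0))))
        (r j) :=
  stmt_16_general T ε Cp Cm r
end

section
/- Global bound and attainment for the surrogated APC-Obj objective: for every δ > 0 and every Δ ∈ C, j^APC(Δ, δ) ≤ δ·M/(1−γ) + K₀, where K₀ := (1/((1−γ)Γ)) Σ_{s∈S} (Γ_s/T_s) Σ_{a∈X_s} n_{s,a} Â_{s,a}. Moreover the bound is attained: if for each s ∈ S the vector Δ̂*_{s,·} ∈ F_s attains M(s), then the vector Δ with Δ_{s,a} := δ·Δ̂*_s(a) belongs to C and satisfies j^APC(Δ, δ) = δ·M/(1−γ) + K₀. -/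
/-!
At each state, write `c` for the clipped deviations and `c̄` for their weighted mean `𝒞_s`.
The state's term of `j^APC` is `∑ n (c - c̄) Â + ∑ n Â`, and `c - c̄` is zero-sum. So it
is enough to show that `D̂(c - c̄) ≤ δ`: homogeneity of the unit-TV problem then bounds
the gain by `δ M(s)`. If `D̂(Δ) ≤ δ`, the clip does nothing and `c = Δ`. Otherwise `c`
is `Δ` soft-thresholded at `ρ = T (D̂(Δ) - δ)`. Because `Δ` is zero-sum, its positive
and its negative part each carry mass `T D̂(Δ) / 2`. Since every `n ≥ 1`, thresholding
removes at least `ρ` from each part that survives, leaving at most `T δ / 2` in each.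
For attainment, `δ Δ̂*` has `D̂ = δ` exactly, so the clip is inactive and `c̄ = 0`.
-/

open Finset

def symClip (x B : ℝ) : ℝ := max (-(max B 0)) (min x (max B 0))

lemma symClip_of_abs_le {x B : ℝ} (h : |x| ≤ B) : symClip x B = x := by
  have hB : 0 ≤ B := (abs_nonneg x).trans h
  rw [symClip, max_eq_left hB, min_eq_left ((le_abs_self x).trans h)]
  exact max_eq_right (by linarith [neg_abs_le x])

lemma symClip_abs_sub {x ρ : ℝ} (hρ : 0 ≤ ρ) :
    symClip x (|x| - ρ) = max (x - ρ) 0 - max (-x - ρ) 0 := by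
  unfold symClip
  rcases le_total 0 x with h | h
  · rw [abs_of_nonneg h, max_eq_right (a := -x - ρ) (by linarith),
      min_eq_right (max_le (by linarith) h)]
    simp
  · rw [abs_of_nonpos h, max_eq_right (a := x - ρ) (by linarith),
      min_eq_left (h.trans (le_max_right _ _)),
      max_eq_left (le_neg.2 (max_le (by linarith) (by linarith)))]
    ring

lemma max_zero_eq_half_add_abs (x : ℝ) : max x 0 = (x + |x|) / 2 := by
  rcases le_total 0 x with h | h
  · rw [max_eq_left h, abs_of_nonneg h]; ring
  · rw [max_eq_right h, abs_of_nonpos h]; ring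

noncomputable section

variable {ι : Type*} [Fintype ι]

def tvDist (w Δ : ι → ℝ) : ℝ := (1 / ∑ a, w a) * ∑ a, w a * |Δ a|

def weightedMean (w f : ι → ℝ) : ℝ := (1 / ∑ a, w a) * ∑ a, w a * f a

def unitTVGains (w A : ι → ℝ) : Set ℝ :=
  {y | ∃ Δ : ι → ℝ,
    tvDist w Δ = 1 ∧ ∑ a, w a * Δ a = 0 ∧ y = ∑ a, w a * Δ a * A a}

def clippedDev (w : ι → ℝ) (δ : ℝ) (Δ : ι → ℝ) (a : ι) : ℝ :=
  symClip (Δ a) ((∑ b, w b) * (δ - tvDist w Δ) + |Δ a|)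

/-- The summand of `j^APC` at one state, without the factor `Γ_s / T_s`;
`weightedMean w (clippedDev w δ Δ)` is `𝒞_s`. -/
def stateObjective (w A : ι → ℝ) (δ : ℝ) (Δ : ι → ℝ) : ℝ :=
  ∑ a, w a * (clippedDev w δ Δ a * A a + (1 - weightedMean w (clippedDev w δ Δ)) * A a)

variable {w : ι → ℝ}

lemma mul_tvDist (hT : ∑ a, w a ≠ 0) (Δ : ι → ℝ) :
    (∑ a, w a) * tvDist w Δ = ∑ a, w a * |Δ a| := by
  rw [tvDist]; field_simp

lemma tvDist_nonneg (hw : ∀ a, 0 ≤ w a) (Δ : ι → ℝ) : 0 ≤ tvDist w Δ :=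
  mul_nonneg (one_div_nonneg.2 (sum_nonneg fun a _ => hw a))
    (sum_nonneg fun a _ => mul_nonneg (hw a) (abs_nonneg _))

lemma tvDist_neg (Δ : ι → ℝ) : tvDist w (fun a => -Δ a) = tvDist w Δ := by
  simp only [tvDist, abs_neg]

lemma tvDist_const_mul {c : ℝ} (hc : 0 ≤ c) (Δ : ι → ℝ) :
    tvDist w (fun a => c * Δ a) = c * tvDist w Δ := by
  simp only [tvDist, abs_mul, abs_of_nonneg hc, mul_left_comm _ c, ← mul_sum]

lemma sum_mul_const_mul (c : ℝ) (f : ι → ℝ) :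
    ∑ a, w a * (c * f a) = c * ∑ a, w a * f a := by
  rw [mul_sum]; exact sum_congr rfl fun a _ => by ring

lemma sum_mul_sub_weightedMean (hT : ∑ a, w a ≠ 0) (f : ι → ℝ) :
    ∑ a, w a * (f a - weightedMean w f) = 0 := by
  simp only [mul_sub, sum_sub_distrib, ← sum_mul, weightedMean]
  field_simp
  ring

lemma sum_mul_abs_sub_weightedMean_le (hw : ∀ a, 0 ≤ w a) (hT : 0 < ∑ a, w a)
    (f : ι → ℝ) :
    ∑ a, w a * |f a - weightedMean w f| ≤ ∑ a, w a * |f a| + |∑ a, w a * f a| :=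
  calc ∑ a, w a * |f a - weightedMean w f|
      ≤ ∑ a, (w a * |f a| + w a * |weightedMean w f|) :=
        sum_le_sum fun a _ => by
          rw [← mul_add]; exact mul_le_mul_of_nonneg_left (abs_sub _ _) (hw a)
    _ = ∑ a, w a * |f a| + (∑ a, w a) * |weightedMean w f| := by
        rw [sum_add_distrib, sum_mul]
    _ = ∑ a, w a * |f a| + |∑ a, w a * f a| := by
        rw [weightedMean, abs_mul, abs_of_pos (one_div_pos.2 hT)]
        field_simp

lemma sum_mul_max_zero_eq_half {Δ : ι → ℝ} (hz : ∑ a, w a * Δ a = 0) :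
    ∑ a, w a * max (Δ a) 0 = (∑ a, w a * |Δ a|) / 2 := by
  calc ∑ a, w a * max (Δ a) 0 = ∑ a, (w a * Δ a + w a * |Δ a|) / 2 :=
        sum_congr rfl fun a _ => by rw [max_zero_eq_half_add_abs]; ring
    _ = _ := by rw [← sum_div, sum_add_distrib, hz, zero_add]

/-- If some term is active, that term alone already loses `w a * ρ ≥ ρ`. -/
lemma sum_mul_max_sub_le (hw : ∀ a, 1 ≤ w a) {ρ : ℝ} (hρ : 0 ≤ ρ) (x : ι → ℝ) :
    ∑ a, w a * max (x a - ρ) 0 ≤ max (∑ a, w a * max (x a) 0 - ρ) 0 := by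
  classical
  by_cases hall : ∀ a, x a ≤ ρ
  · rw [sum_eq_zero fun a _ => by rw [max_eq_right (by linarith [hall a]), mul_zero]]
    exact le_max_right _ _
  simp only [not_forall, not_le] at hall
  obtain ⟨a₀, ha₀⟩ := hall
  have hterm : ∀ a,
      w a * max (x a - ρ) 0 ≤ w a * max (x a) 0 - if a = a₀ then ρ else 0 := by
    intro a
    split_ifs with ha
    · subst ha
      rw [max_eq_left (by linarith), max_eq_left (by linarith)]
      nlinarith [hw a]
    · rw [sub_zero]
      exact mul_le_mul_of_nonneg_left (max_le_max (by linarith) le_rfl) (by linarith [hw a])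
  refine le_max_of_le_left ((sum_le_sum fun a _ => hterm a).trans_eq ?_)
  rw [sum_sub_distrib, sum_ite_eq' univ a₀, if_pos (mem_univ a₀)]

variable {δ : ℝ} {Δ : ι → ℝ}

lemma clippedDev_of_tvDist_le (hT : 0 ≤ ∑ a, w a) (h : tvDist w Δ ≤ δ) :
    clippedDev w δ Δ = Δ :=
  funext fun _ => symClip_of_abs_le (le_add_of_nonneg_left (mul_nonneg hT (sub_nonneg.2 h)))

lemma clippedDev_of_lt_tvDist (hT : 0 ≤ ∑ a, w a) (h : δ < tvDist w Δ) (a : ι) :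
    clippedDev w δ Δ a
      = max (Δ a - (∑ b, w b) * (tvDist w Δ - δ)) 0
        - max (-Δ a - (∑ b, w b) * (tvDist w Δ - δ)) 0 := by
  rw [clippedDev, ← symClip_abs_sub (mul_nonneg hT (sub_nonneg.2 h.le))]
  ring_nf

lemma sum_mul_max_sub_le_half (hw : ∀ a, 1 ≤ w a) (hT : 0 < ∑ a, w a)
    (hz : ∑ a, w a * Δ a = 0) (hδ : 0 ≤ δ) (h : δ < tvDist w Δ) :
    ∑ a, w a * max (Δ a - (∑ b, w b) * (tvDist w Δ - δ)) 0 ≤ (∑ a, w a) * δ / 2 := by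
  refine (sum_mul_max_sub_le hw (mul_nonneg hT.le (sub_nonneg.2 h.le)) Δ).trans
    (max_le ?_ (by positivity))
  rw [sum_mul_max_zero_eq_half hz, ← mul_tvDist hT.ne']
  nlinarith

lemma clippedDev_mass_le (hw : ∀ a, 1 ≤ w a) (hT : 0 < ∑ a, w a)
    (hz : ∑ a, w a * Δ a = 0) (hδ : 0 ≤ δ) :
    ∑ a, w a * |clippedDev w δ Δ a| + |∑ a, w a * clippedDev w δ Δ a|
      ≤ (∑ a, w a) * δ := by
  rcases le_or_gt (tvDist w Δ) δ with h | h
  · rw [clippedDev_of_tvDist_le hT.le h, hz, abs_zero, add_zero, ← mul_tvDist hT.ne']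
    exact mul_le_mul_of_nonneg_left h hT.le
  set ρ := (∑ b, w b) * (tvDist w Δ - δ)
  set P := ∑ a, w a * max (Δ a - ρ) 0
  set Q := ∑ a, w a * max (-Δ a - ρ) 0
  have hc := clippedDev_of_lt_tvDist hT.le h
  have hP : P ≤ (∑ a, w a) * δ / 2 := sum_mul_max_sub_le_half hw hT hz hδ h
  have hQ : Q ≤ (∑ a, w a) * δ / 2 := by
    have hz' : ∑ a, w a * -Δ a = 0 := by simp [mul_neg, sum_neg_distrib, hz]
    have := sum_mul_max_sub_le_half hw hT hz' hδ (by rwa [tvDist_neg])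
    simpa only [tvDist_neg, neg_neg] using this
  have hsum : ∑ a, w a * clippedDev w δ Δ a = P - Q := by
    rw [← sum_sub_distrib]
    exact sum_congr rfl fun a _ => by rw [hc, mul_sub]
  have habs : ∑ a, w a * |clippedDev w δ Δ a| ≤ P + Q := by
    rw [← sum_add_distrib]
    refine sum_le_sum fun a _ => ?_
    rw [hc, ← mul_add]
    refine mul_le_mul_of_nonneg_left ((abs_sub _ _).trans_eq ?_) (by linarith [hw a])
    rw [abs_of_nonneg (le_max_right _ _), abs_of_nonneg (le_max_right _ _)]
  have hP0 : 0 ≤ P := sum_nonneg fun a _ => mul_nonneg (by linarith [hw a]) (le_max_right _ _)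
  have hQ0 : 0 ≤ Q := sum_nonneg fun a _ => mul_nonneg (by linarith [hw a]) (le_max_right _ _)
  rw [hsum]
  rcases abs_cases (P - Q) with ⟨h', -⟩ | ⟨h', -⟩ <;> linarith

lemma tvDist_centered_clippedDev_le (hw : ∀ a, 1 ≤ w a) (hT : 0 < ∑ a, w a)
    (hz : ∑ a, w a * Δ a = 0) (hδ : 0 ≤ δ) :
    tvDist w (fun a => clippedDev w δ Δ a - weightedMean w (clippedDev w δ Δ)) ≤ δ := by
  have hw0 : ∀ a, 0 ≤ w a := fun a => zero_le_one.trans (hw a)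
  rw [← mul_le_mul_iff_of_pos_left hT, mul_tvDist hT.ne']
  exact (sum_mul_abs_sub_weightedMean_le hw0 hT _).trans (clippedDev_mass_le hw hT hz hδ)

variable {A : ι → ℝ} {Mv : ℝ}

lemma neg_mem_unitTVGains {y : ℝ} (hy : y ∈ unitTVGains w A) : -y ∈ unitTVGains w A := by
  obtain ⟨Δ, h1, h2, rfl⟩ := hy
  refine ⟨fun a => -Δ a, by rwa [tvDist_neg], ?_, ?_⟩
  · simp [mul_neg, sum_neg_distrib, h2]
  · simp [mul_neg, neg_mul, sum_neg_distrib]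

lemma IsGreatest.unitTVGains_nonneg (hM : IsGreatest (unitTVGains w A) Mv) : 0 ≤ Mv := by
  linarith [hM.2 (neg_mem_unitTVGains hM.1)]

lemma sum_weights_pos_of_mem_unitTVGains (hw : ∀ a, 0 ≤ w a) {y : ℝ}
    (hy : y ∈ unitTVGains w A) : 0 < ∑ a, w a := by
  obtain ⟨Δ, h1, -, -⟩ := hy
  refine (sum_nonneg fun a _ => hw a).lt_of_ne fun h0 => ?_
  simp [tvDist, ← h0] at h1

/-- A zero-sum `v` with `tvDist w v > 0` is `tvDist w v` times a feasible direction. -/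
lemma sum_mul_mul_le_tvDist_mul (hw : ∀ a, 0 ≤ w a) (hM : IsGreatest (unitTVGains w A) Mv)
    {v : ι → ℝ} (hv : ∑ a, w a * v a = 0) :
    ∑ a, w a * v a * A a ≤ tvDist w v * Mv := by
  have hT := sum_weights_pos_of_mem_unitTVGains hw hM.1
  rcases (tvDist_nonneg hw v).eq_or_lt with h0 | hpos
  · have hmass : ∑ a, w a * |v a| = 0 := by rw [← mul_tvDist hT.ne', ← h0, mul_zero]
    have hterm :=
      (sum_eq_zero_iff_of_nonneg fun a _ => mul_nonneg (hw a) (abs_nonneg _)).1 hmass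
    rw [← h0, zero_mul]
    refine (sum_eq_zero fun a ha => ?_).le
    have hwv : w a * v a = 0 :=
      abs_eq_zero.1 (by rw [abs_mul, abs_of_nonneg (hw a)]; exact hterm a ha)
    rw [hwv, zero_mul]
  · have hfeas : ∑ a, w a * ((tvDist w v)⁻¹ * v a) * A a ∈ unitTVGains w A :=
      ⟨fun a => (tvDist w v)⁻¹ * v a,
        by rw [tvDist_const_mul (inv_nonneg.2 hpos.le), inv_mul_cancel₀ hpos.ne'],
        by rw [sum_mul_const_mul, hv, mul_zero], rfl⟩
    have hscale : ∑ a, w a * ((tvDist w v)⁻¹ * v a) * A a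
        = (tvDist w v)⁻¹ * ∑ a, w a * v a * A a := by
      rw [mul_sum]; exact sum_congr rfl fun a _ => by ring
    have hle := hM.2 hfeas
    rwa [hscale, inv_mul_le_iff₀ hpos] at hle

lemma stateObjective_eq :
    stateObjective w A δ Δ
      = ∑ a, w a * (clippedDev w δ Δ a - weightedMean w (clippedDev w δ Δ)) * A a
        + ∑ a, w a * A a := by
  rw [stateObjective, ← sum_add_distrib]
  exact sum_congr rfl fun a _ => by ring

lemma stateObjective_le (hw : ∀ a, 1 ≤ w a) (hM : IsGreatest (unitTVGains w A) Mv)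
    (hδ : 0 ≤ δ) (hz : ∑ a, w a * Δ a = 0) :
    stateObjective w A δ Δ ≤ δ * Mv + ∑ a, w a * A a := by
  have hw0 : ∀ a, 0 ≤ w a := fun a => zero_le_one.trans (hw a)
  have hT := sum_weights_pos_of_mem_unitTVGains hw0 hM.1
  rw [stateObjective_eq, add_le_add_iff_right]
  calc _ ≤ tvDist w (fun a => clippedDev w δ Δ a - weightedMean w (clippedDev w δ Δ)) * Mv :=
        sum_mul_mul_le_tvDist_mul hw0 hM (sum_mul_sub_weightedMean hT.ne' _)
    _ ≤ δ * Mv := mul_le_mul_of_nonneg_right (tvDist_centered_clippedDev_le hw hT hz hδ)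
        hM.unitTVGains_nonneg

lemma stateObjective_const_mul (hw : ∀ a, 0 ≤ w a) (hδ : 0 ≤ δ) (h1 : tvDist w Δ = 1)
    (hz : ∑ a, w a * Δ a = 0) :
    stateObjective w A δ (fun a => δ * Δ a)
      = δ * ∑ a, w a * Δ a * A a + ∑ a, w a * A a := by
  have hclip : clippedDev w δ (fun a => δ * Δ a) = fun a => δ * Δ a :=
    clippedDev_of_tvDist_le (sum_nonneg fun a _ => hw a)
      (by rw [tvDist_const_mul hδ, h1, mul_one])
  have hmean : weightedMean w (fun a => δ * Δ a) = 0 := by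
    rw [weightedMean, sum_mul_const_mul, hz, mul_zero, mul_zero]
  rw [stateObjective_eq, hclip, hmean, mul_sum]
  congr 1
  exact sum_congr rfl fun a _ => by ring

end

theorem stmt_19_general {S : Type} [Fintype S]
    (X : S → Type) [∀ s, Fintype (X s)]
    (n : ∀ s, X s → ℕ) (hn : ∀ s a, 1 ≤ n s a)
    (A : ∀ s, X s → ℝ)
    (Γ : S → ℝ) (hΓ : ∀ s, 0 < Γ s)
    (γ : ℝ) (hγ1 : γ < 1)
    (M : S → ℝ)
    (hM : ∀ s, IsGreatest {y : ℝ | ∃ Δ : X s → ℝ,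
        (1 / (∑ a, (n s a : ℝ))) * (∑ a, (n s a : ℝ) * |Δ a|) = 1 ∧
        (∑ a, (n s a : ℝ) * Δ a) = 0 ∧
        y = ∑ a, (n s a : ℝ) * Δ a * A s a} (M s)) :
    let Ts : S → ℝ := fun s => ∑ a, (n s a : ℝ)
    let Γtot : ℝ := ∑ s, Γ s
    let Mtot : ℝ := (1 / Γtot) * ∑ s, (Γ s / Ts s) * M s
    let Dhat : S → (∀ s', X s' → ℝ) → ℝ :=
      fun s Δ => (1 / Ts s) * ∑ a, (n s a : ℝ) * |Δ s a|
    let C : Set (∀ s, X s → ℝ) := {Δ | ∀ s, ∑ a, (n s a : ℝ) * Δ s a = 0}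
    let clip : ℝ → ℝ → ℝ := fun x B => max (-(max B 0)) (min x (max B 0))
    let Cs : S → (∀ s', X s' → ℝ) → ℝ → ℝ := fun s Δ δ =>
      (1 / Ts s) * ∑ a, (n s a : ℝ) * clip (Δ s a) (Ts s * (δ - Dhat s Δ) + |Δ s a|)
    let jAPC : (∀ s, X s → ℝ) → ℝ → ℝ := fun Δ δ =>
      (1 / ((1 - γ) * Γtot)) * ∑ s, (Γ s / Ts s) * ∑ a, (n s a : ℝ) *
        (clip (Δ s a) (Ts s * (δ - Dhat s Δ) + |Δ s a|) * A s a + (1 - Cs s Δ δ) * A s a)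
    let K0 : ℝ := (1 / ((1 - γ) * Γtot)) * ∑ s, (Γ s / Ts s) * ∑ a, (n s a : ℝ) * A s a
    (∀ δ : ℝ, 0 < δ → ∀ Δ ∈ C, jAPC Δ δ ≤ δ * Mtot / (1 - γ) + K0) ∧
    (∀ δ : ℝ, 0 < δ → ∀ Δhat : ∀ s, X s → ℝ,
      (∀ s, ((1 / Ts s) * ∑ a, (n s a : ℝ) * |Δhat s a| = 1) ∧
        (∑ a, (n s a : ℝ) * Δhat s a = 0) ∧
        (∑ a, (n s a : ℝ) * Δhat s a * A s a = M s)) →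
      ((fun s a => δ * Δhat s a) ∈ C ∧
        jAPC (fun s a => δ * Δhat s a) δ = δ * Mtot / (1 - γ) + K0)) := by
  intro Ts Γtot Mtot Dhat C clip Cs jAPC K0
  have hw : ∀ s a, 1 ≤ (n s a : ℝ) := fun s a => Nat.one_le_cast.2 (hn s a)
  have hw0 : ∀ s a, 0 ≤ (n s a : ℝ) := fun s a => (n s a).cast_nonneg
  have hj : ∀ Δ δ, jAPC Δ δ = (1 / ((1 - γ) * Γtot)) *
      ∑ s, (Γ s / Ts s) * stateObjective (fun a => (n s a : ℝ)) (A s) δ (Δ s) :=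
    fun _ _ => rfl
  have haverage : ∀ δ, (1 / ((1 - γ) * Γtot)) *
      ∑ s, (Γ s / Ts s) * (δ * M s + ∑ a, (n s a : ℝ) * A s a)
        = δ * Mtot / (1 - γ) + K0 := by
    intro δ
    simp only [Mtot, K0, one_div, mul_inv, mul_add, sum_add_distrib, mul_left_comm _ δ,
      ← mul_sum]
    ring
  have hnorm : 0 ≤ 1 / ((1 - γ) * Γtot) :=
    one_div_nonneg.2 (mul_nonneg (by linarith) (sum_nonneg fun s _ => (hΓ s).le))
  have hweight : ∀ s, 0 ≤ Γ s / Ts s := fun s =>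
    div_nonneg (hΓ s).le (sum_nonneg fun a _ => hw0 s a)
  refine ⟨fun δ hδ Δ hΔ => ?_, fun δ hδ Δhat hΔhat => ⟨fun s => ?_, ?_⟩⟩
  · rw [hj, ← haverage]
    refine mul_le_mul_of_nonneg_left (sum_le_sum fun s _ => ?_) hnorm
    exact mul_le_mul_of_nonneg_left
      (stateObjective_le (hw s) (hM s) hδ.le (hΔ s)) (hweight s)
  · rw [sum_mul_const_mul, (hΔhat s).2.1, mul_zero]
  · rw [hj, ← haverage]
    refine congrArg _ (sum_congr rfl fun s _ => ?_)
    rw [stateObjective_const_mul (hw0 s) hδ.le (hΔhat s).1 (hΔhat s).2.1, (hΔhat s).2.2]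

/-- global bound and attainment for the surrogated APC-Obj
objective: j^APC(Δ, δ) ≤ δ·M/(1−γ) + K₀ on the zero-sum set C, with equality
attained by scaling per-state maximizers of the unit-TV problem by δ. -/
theorem stmt_19 {S : Type} [Fintype S] [Nonempty S]
    (X : S → Type) [∀ s, Fintype (X s)]
    (hX : ∀ s, 2 ≤ Fintype.card (X s))
    (n : ∀ s, X s → ℕ) (hn : ∀ s a, 1 ≤ n s a)
    (A : ∀ s, X s → ℝ)
    (Anorm : ℝ) (hA : IsGreatest {x : ℝ | ∃ s, ∃ a : X s, x = |A s a|} Anorm)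
    (hApos : 0 < Anorm)
    (Γ : S → ℝ) (hΓ : ∀ s, 0 < Γ s)
    (γ : ℝ) (hγ0 : 0 < γ) (hγ1 : γ < 1)
    (M : S → ℝ)
    (hM : ∀ s, IsGreatest {y : ℝ | ∃ Δ : X s → ℝ,
        (1 / (∑ a, (n s a : ℝ))) * (∑ a, (n s a : ℝ) * |Δ a|) = 1 ∧
        (∑ a, (n s a : ℝ) * Δ a) = 0 ∧
        y = ∑ a, (n s a : ℝ) * Δ a * A s a} (M s)) :
    let Ts : S → ℝ := fun s => ∑ a, (n s a : ℝ)
    let Γtot : ℝ := ∑ s, Γ s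
    let Mtot : ℝ := (1 / Γtot) * ∑ s, (Γ s / Ts s) * M s
    let Dhat : S → (∀ s', X s' → ℝ) → ℝ :=
      fun s Δ => (1 / Ts s) * ∑ a, (n s a : ℝ) * |Δ s a|
    let C : Set (∀ s, X s → ℝ) := {Δ | ∀ s, ∑ a, (n s a : ℝ) * Δ s a = 0}
    let clip : ℝ → ℝ → ℝ := fun x B => max (-(max B 0)) (min x (max B 0))
    let Cs : S → (∀ s', X s' → ℝ) → ℝ → ℝ := fun s Δ δ =>
      (1 / Ts s) * ∑ a, (n s a : ℝ) * clip (Δ s a) (Ts s * (δ - Dhat s Δ) + |Δ s a|)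
    let jAPC : (∀ s, X s → ℝ) → ℝ → ℝ := fun Δ δ =>
      (1 / ((1 - γ) * Γtot)) * ∑ s, (Γ s / Ts s) * ∑ a, (n s a : ℝ) *
        (clip (Δ s a) (Ts s * (δ - Dhat s Δ) + |Δ s a|) * A s a + (1 - Cs s Δ δ) * A s a)
    let K0 : ℝ := (1 / ((1 - γ) * Γtot)) * ∑ s, (Γ s / Ts s) * ∑ a, (n s a : ℝ) * A s a
    (∀ δ : ℝ, 0 < δ → ∀ Δ ∈ C, jAPC Δ δ ≤ δ * Mtot / (1 - γ) + K0) ∧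
    (∀ δ : ℝ, 0 < δ → ∀ Δhat : ∀ s, X s → ℝ,
      (∀ s, ((1 / Ts s) * ∑ a, (n s a : ℝ) * |Δhat s a| = 1) ∧
        (∑ a, (n s a : ℝ) * Δhat s a = 0) ∧
        (∑ a, (n s a : ℝ) * Δhat s a * A s a = M s)) →
      ((fun s a => δ * Δhat s a) ∈ C ∧
        jAPC (fun s a => δ * Δhat s a) δ = δ * Mtot / (1 - γ) + K0)) :=
  stmt_19_general X n hn A Γ hΓ γ hγ1 M hM
end
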